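/- Let D be a tournament missing disjoint paths of length 2 and let C = a_1b_1c_1, …, a_kb_kc_k be a double cycle in Δ(D). Then for every i ∈ {1,…,k}, in the induced subdigraph D[K(C)]: N⁺(a_i) ∖ {c_i} = N⁺(c_i) ∖ {a_i} and N⁻(a_i) ∖ {c_i} = N⁻(c_i) ∖ {a_i}. -/

import Mathlib

namespace SSNC

variable {V : Type*}

/-- The arc relation of an oriented graph: no digons (hence irreflexive). -/
def Oriented (A : V → V → Prop) : Prop := ∀ u v, A u v → ¬ A v u

/-- `u ∈ N⁺⁺(v)`: the second out-neighborhood. -/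
def SecondOut (A : V → V → Prop) (v u : V) : Prop :=
  u ≠ v ∧ ¬ A v u ∧ ∃ w, A v w ∧ A w u

/-- `{u, v}` is a missing edge of the digraph. -/
def IsMissing (A : V → V → Prop) (u v : V) : Prop :=
  u ≠ v ∧ ¬ A u v ∧ ¬ A v u

/-- The losing relation for a fixed labeling of the two pairs: `a→x`, `b→y`,
`y ∉ N⁺(a) ∪ N⁺⁺(a)` and `x ∉ N⁺(b) ∪ N⁺⁺(b)`. -/
def LosesOrd (A : V → V → Prop) (a b x y : V) : Prop :=
  A a x ∧ A b y ∧ ¬ A a y ∧ ¬ SecondOut A a y ∧ ¬ A b x ∧ ¬ SecondOut A b x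

/-- The missing edge `{a,b}` loses to the missing edge `{x,y}` (for some labeling). -/
def Loses (A : V → V → Prop) (a b x y : V) : Prop :=
  LosesOrd A a b x y ∨ LosesOrd A a b y x

/-- Degree of a vertex in the missing graph. -/
noncomputable def mdeg (A : V → V → Prop) (v : V) : ℕ :=
  ({w | IsMissing A v w} : Set V).ncard

/-- The missing graph, as a simple graph. -/
def missingGraph (A : V → V → Prop) : SimpleGraph V where
  Adj u v := IsMissing A u v
  symm := by
    constructor
    rintro u v ⟨h1, h2, h3⟩
    exact ⟨h1.symm, h3, h2⟩
  loopless := by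
    constructor
    rintro v ⟨h1, -, -⟩
    exact h1 rfl

/-- The missing graph is a vertex-disjoint union of paths
(equivalently: acyclic with maximum degree at most 2). -/
def MissingDisjointPaths (A : V → V → Prop) : Prop :=
  (missingGraph A).IsAcyclic ∧ ∀ v, mdeg A v ≤ 2

/-- The missing graph is a vertex-disjoint union of paths on exactly 3 vertices
(equivalently: every missing edge has one endpoint of missing-degree 1 and one of
missing-degree 2). -/
def MissingPaths2 (A : V → V → Prop) : Prop :=
  ∀ u v, IsMissing A u v →
    (mdeg A u = 1 ∧ mdeg A v = 2) ∨ (mdeg A u = 2 ∧ mdeg A v = 1)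

/-- The missing graph is a vertex-disjoint union of paths on 2 or 3 vertices. -/
def MissingPathsLe2 (A : V → V → Prop) : Prop :=
  ∀ u v, IsMissing A u v →
    (mdeg A u = 1 ∧ mdeg A v = 1) ∨ (mdeg A u = 1 ∧ mdeg A v = 2) ∨
    (mdeg A u = 2 ∧ mdeg A v = 1)

/-- Out-degree of the missing edge `{u,v}` in the dependency digraph `Δ(D)`:
the number of missing edges it loses to. -/
noncomputable def outDegDelta (A : V → V → Prop) (u v : V) : ℕ :=
  ({f : Sym2 V | ∃ x y, f = s(x, y) ∧ IsMissing A x y ∧ Loses A u v x y}).ncard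

/-- In-degree of the missing edge `{u,v}` in the dependency digraph `Δ(D)`:
the number of missing edges losing to it. -/
noncomputable def inDegDelta (A : V → V → Prop) (u v : V) : ℕ :=
  ({f : Sym2 V | ∃ x y, f = s(x, y) ∧ IsMissing A x y ∧ Loses A x y u v}).ncard

/-- `C = a₁b₁c₁, …, a_k b_k c_k` is a double cycle in `Δ(D)`: pairwise vertex-disjoint
missing paths of length 2 (`k ≥ 2`), where each of `{aᵢ,bᵢ}, {bᵢ,cᵢ}` loses to each of
`{aᵢ₊₁,bᵢ₊₁}, {bᵢ₊₁,cᵢ₊₁}` (indices modulo `k`). -/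
def IsDoubleCycle (A : V → V → Prop) (k : ℕ) (a b c : ZMod k → V) : Prop :=
  2 ≤ k ∧
  (∀ i, IsMissing A (a i) (b i) ∧ IsMissing A (b i) (c i) ∧ a i ≠ c i) ∧
  (∀ i j, i ≠ j → Disjoint ({a i, b i, c i} : Set V) {a j, b j, c j}) ∧
  (∀ i, Loses A (a i) (b i) (a (i + 1)) (b (i + 1)) ∧
        Loses A (a i) (b i) (b (i + 1)) (c (i + 1)) ∧
        Loses A (b i) (c i) (a (i + 1)) (b (i + 1)) ∧
        Loses A (b i) (c i) (b (i + 1)) (c (i + 1)))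

/-- `K(C)` for a double cycle `C`. -/
def Kset {k : ℕ} (a b c : ZMod k → V) : Set V :=
  {v | ∃ i, v = a i ∨ v = b i ∨ v = c i}

/-- Out-neighborhood in the subdigraph induced on `K`. -/
def outIn (A : V → V → Prop) (K : Set V) (v : V) : Set V := {u | u ∈ K ∧ A v u}

/-- In-neighborhood in the subdigraph induced on `K`. -/
def inIn (A : V → V → Prop) (K : Set V) (v : V) : Set V := {u | u ∈ K ∧ A u v}

/-- Second out-neighborhood in the subdigraph induced on `K`. -/
def secondOutIn (A : V → V → Prop) (K : Set V) (v : V) : Set V :=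
  {u | u ∈ K ∧ u ≠ v ∧ ¬ A v u ∧ ∃ w ∈ K, A v w ∧ A w u}

/-- Second in-neighborhood in the subdigraph induced on `K`. -/
def secondInIn (A : V → V → Prop) (K : Set V) (v : V) : Set V :=
  {u | u ∈ K ∧ u ≠ v ∧ ¬ A u v ∧ ∃ w ∈ K, A u w ∧ A w v}

/-!
Vertices of different missing paths are joined by an arc. Call `a`, `c` outer and `b` inner.
The four losing relations from path `n` to path `n + 1` force the vertices of path `n` to be
blocked (no path of length at most two) from those of path `n + 1`, either for all pairs of
different kinds or for all pairs of the same kind; so path `n + 1` dominates path `n` on those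
pairs. Blocking carries domination backwards: if path `m` dominates path `n + 1` on the pairs
with one kind relation, then `m` dominates `n` on the pairs with the composed relation. Going
around the cycle, any path dominates any other on all pairs with some fixed kind relation, and
since the same holds with the roles exchanged and `D` has no digons, the arc between two
vertices of different paths depends only on their kinds. Hence the outer vertices `aᵢ`, `cᵢ`
have the same neighbours outside their path, and inside it neither is adjacent to `bᵢ`.
-/

theorem ZMod.induction_on_ne {k : ℕ} [NeZero k] {P : ZMod k → ZMod k → Prop}
    (base : ∀ m, P (m - 1) m) (step : ∀ n m, n ≠ m → P (n + 1) m → P n m)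
    {n m : ZMod k} (hnm : n ≠ m) : P n m := by
  have key : ∀ d, 1 ≤ d → d < k → P (m - d) m := by
    intro d hd
    induction d, hd using Nat.le_induction with
    | base => simpa using fun _ => base m
    | succ d hd ih =>
      intro hdk
      have hne : m - ((d + 1 : ℕ) : ZMod k) ≠ m := by
        rw [Ne, sub_eq_self, ZMod.natCast_eq_zero_iff]
        exact fun h => absurd (Nat.le_of_dvd (by omega) h) (by omega)
      refine step _ m hne ?_
      convert ih (by omega) using 2
      push_cast
      ring
  have hpos : (m - n).val ≠ 0 := by rwa [Ne, ZMod.val_eq_zero, sub_eq_zero, eq_comm]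
  simpa using key (m - n).val (by omega) (ZMod.val_lt _)

variable {A : V → V → Prop}

theorem IsMissing.symm {u v : V} (h : IsMissing A u v) : IsMissing A v u :=
  ⟨h.1.symm, h.2.2, h.2.1⟩

theorem mem_of_isMissing_of_mdeg_le {x w : V} {S : Set V} (hS : S ⊆ {w | IsMissing A x w})
    (hdeg : mdeg A x ≤ S.ncard) (hpos : mdeg A x ≠ 0) (hw : IsMissing A x w) : w ∈ S := by
  rwa [Set.eq_of_subset_of_ncard_le hS hdeg (Set.finite_of_ncard_ne_zero hpos)]

theorem mem_of_isMissing_of_missingPaths2 (hP : MissingPaths2 A) {a b c : V}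
    (hab : IsMissing A a b) (hbc : IsMissing A b c) (hac : a ≠ c) {x w : V}
    (hx : x ∈ ({a, b, c} : Set V)) (hw : IsMissing A x w) : w ∈ ({a, b, c} : Set V) := by
  have hb : mdeg A b = 2 := by
    have hpos : mdeg A b ≠ 0 := by rcases hP a b hab with h | h <;> omega
    have : 2 ≤ mdeg A b := by
      rw [← Set.ncard_pair hac]
      refine Set.ncard_le_ncard ?_ (Set.finite_of_ncard_ne_zero hpos)
      rintro w (rfl | rfl)
      exacts [hab.symm, hbc]
    rcases hP a b hab with h | h <;> omega
  have ha : mdeg A a = 1 := by rcases hP a b hab with h | h <;> omega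
  have hc : mdeg A c = 1 := by rcases hP b c hbc with h | h <;> omega
  rcases hx with rfl | rfl | rfl
  · have := mem_of_isMissing_of_mdeg_le (S := {b}) (by simpa using hab) (by simp [ha])
      (by omega) hw
    simp_all
  · have := mem_of_isMissing_of_mdeg_le (S := {a, c}) (by
      rintro w (rfl | rfl)
      exacts [hab.symm, hbc]) (by simp [hb, Set.ncard_pair hac]) (by omega) hw
    rcases this with rfl | rfl <;> simp
  · have := mem_of_isMissing_of_mdeg_le (S := {b}) (by simpa using hbc.symm) (by simp [hc])
      (by omega) hw
    simp_all

/-- `q ∉ N⁺(p) ∪ N⁺⁺(p)`, without the side condition `q ≠ p`. -/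
def Blocked (A : V → V → Prop) (p q : V) : Prop := ¬ A p q ∧ ∀ w, A p w → ¬ A w q

theorem LosesOrd.blocked {a b x y : V} (h : LosesOrd A a b x y) (hya : y ≠ a) (hxb : x ≠ b) :
    Blocked A a y ∧ Blocked A b x :=
  ⟨⟨h.2.2.1, fun w haw hwy => h.2.2.2.1 ⟨hya, h.2.2.1, w, haw, hwy⟩⟩,
    ⟨h.2.2.2.2.1, fun w hbw hwx => h.2.2.2.2.2 ⟨hxb, h.2.2.2.2.1, w, hbw, hwx⟩⟩⟩

section Blocks

variable (A) {ι T : Type*} (κ : T → Bool) (v : ι → T → V)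

def FullyJoined (n m : ι) : Prop := ∀ t s, A (v n t) (v m s) ∨ A (v m s) (v n t)

def ArcsInto (e : Bool) (n m : ι) : Prop := ∀ t s, (κ t ^^ κ s) = e → A (v m s) (v n t)

def BlockedTo (e : Bool) (n m : ι) : Prop :=
  ∀ t s, (κ t ^^ κ s) = e → Blocked A (v n t) (v m s)

variable {A κ v}

theorem ArcsInto.of_blockedTo {e : Bool} {n m : ι} (hjoin : FullyJoined A v n m)
    (h : BlockedTo A κ v e n m) : ArcsInto A κ v e n m :=
  fun t s hts => (hjoin t s).resolve_left (h t s hts).1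

theorem ArcsInto.of_blockedTo_of_arcsInto (hκ : Function.Surjective κ) {e r : Bool}
    {n n' m : ι} (hjoin : FullyJoined A v n m) (hB : BlockedTo A κ v e n n')
    (hI : ArcsInto A κ v r n' m) : ArcsInto A κ v (e ^^ r) n m := by
  intro t s hts
  obtain ⟨y, hy⟩ := hκ (κ t ^^ e)
  refine (hjoin t s).resolve_left fun hts' => (hB t y ?_).2 _ hts' (hI y s ?_)
  · simp [hy]
  · rw [hy]
    revert hts
    cases κ t <;> cases κ s <;> cases e <;> cases r <;> decide

theorem arc_iff_of_arcsInto (hA : Oriented A) (hκ : Function.Surjective κ) {e e' : Bool}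
    {n m : ι} (h₁ : ArcsInto A κ v e n m) (h₂ : ArcsInto A κ v e' m n) (t s : T) :
    A (v m s) (v n t) ↔ (κ t ^^ κ s) = e := by
  have hee' : e' = !e := by
    obtain ⟨t₀, -⟩ := hκ true
    obtain ⟨s₀, hs₀⟩ := hκ (κ t₀ ^^ e)
    by_contra hne
    refine hA _ _ (h₁ t₀ s₀ (by simp [hs₀])) (h₂ s₀ t₀ ?_)
    rw [hs₀]
    revert hne
    cases κ t₀ <;> cases e <;> cases e' <;> decide
  refine ⟨fun h => ?_, h₁ t s⟩
  by_contra hts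
  refine hA _ _ h (h₂ s t ?_)
  rw [hee']
  revert hts
  cases κ t <;> cases κ s <;> cases e <;> decide

theorem exists_arcsInto_of_cycle {k : ℕ} (hk : 1 < k) {v : ZMod k → T → V}
    (hκ : Function.Surjective κ) (hjoin : ∀ n m, n ≠ m → FullyJoined A v n m)
    (hblk : ∀ n, ∃ e, BlockedTo A κ v e n (n + 1)) {n m : ZMod k} (hnm : n ≠ m) :
    ∃ e, ArcsInto A κ v e n m := by
  have : NeZero k := NeZero.of_gt hk
  have : Fact (1 < k) := ⟨hk⟩
  refine ZMod.induction_on_ne (P := fun n m => ∃ e, ArcsInto A κ v e n m) (fun m => ?_)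
    (fun n m hnm ⟨r, hr⟩ => ?_) hnm
  · obtain ⟨e, he⟩ := hblk (m - 1)
    rw [sub_add_cancel] at he
    exact ⟨e, .of_blockedTo (hjoin _ _ (by simp)) he⟩
  · obtain ⟨e, he⟩ := hblk n
    exact ⟨_, .of_blockedTo_of_arcsInto hκ (hjoin n m hnm) he hr⟩

theorem arc_iff_of_kind_eq {k : ℕ} (hk : 1 < k) {v : ZMod k → T → V} (hA : Oriented A)
    (hκ : Function.Surjective κ) (hjoin : ∀ n m, n ≠ m → FullyJoined A v n m)
    (hblk : ∀ n, ∃ e, BlockedTo A κ v e n (n + 1)) {n m : ZMod k} (hnm : n ≠ m)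
    {t t' : T} (htt' : κ t = κ t') (s : T) :
    (A (v n t) (v m s) ↔ A (v n t') (v m s)) ∧ (A (v m s) (v n t) ↔ A (v m s) (v n t')) := by
  obtain ⟨e, he⟩ := exists_arcsInto_of_cycle hk hκ hjoin hblk hnm
  obtain ⟨e', he'⟩ := exists_arcsInto_of_cycle hk hκ hjoin hblk hnm.symm
  have hin : A (v m s) (v n t) ↔ A (v m s) (v n t') := by
    rw [arc_iff_of_arcsInto hA hκ he he', arc_iff_of_arcsInto hA hκ he he', htt']
  refine ⟨?_, hin⟩
  have hout : ∀ t, A (v n t) (v m s) ↔ ¬ A (v m s) (v n t) := fun t =>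
    ⟨hA _ _, (hjoin n m hnm t s).resolve_right⟩
  rw [hout, hout, hin]

end Blocks

def isOuter : Fin 3 → Bool := ![true, false, true]

theorem isOuter_surjective : Function.Surjective isOuter := fun
  | true => ⟨0, rfl⟩
  | false => ⟨1, rfl⟩

theorem exists_blocked_of_loses {a b c a' b' c' : V}
    (hne : ∀ t s, ![a, b, c] t ≠ ![a', b', c'] s)
    (L1 : Loses A a b a' b') (L2 : Loses A a b b' c') (L3 : Loses A b c a' b')
    (L4 : Loses A b c b' c') :
    ∃ e, ∀ t s, (isOuter t ^^ isOuter s) = e →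
      Blocked A (![a, b, c] t) (![a', b', c'] s) := by
  rcases L1 with L1 | L1
  · obtain ⟨hab', hba'⟩ := L1.blocked (hne 0 1).symm (hne 1 0).symm
    obtain ⟨-, hbc'⟩ := (L2.resolve_left fun h => hab'.1 h.1).blocked
      (hne 0 1).symm (hne 1 2).symm
    obtain ⟨-, hcb'⟩ := (L3.resolve_left fun h => hba'.1 h.1).blocked
      (hne 1 0).symm (hne 2 1).symm
    refine ⟨true, fun t s h => ?_⟩
    fin_cases t <;> fin_cases s <;> simp [isOuter] at h ⊢ <;> assumption
  · obtain ⟨haa', hbb'⟩ := L1.blocked (hne 0 0).symm (hne 1 1).symm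
    obtain ⟨hac', -⟩ := (L2.resolve_right fun h => hbb'.1 h.2.1).blocked
      (hne 0 2).symm (hne 1 1).symm
    obtain ⟨-, hca'⟩ := (L3.resolve_right fun h => hbb'.1 h.1).blocked
      (hne 1 1).symm (hne 2 0).symm
    obtain ⟨-, hcc'⟩ := (L4.resolve_left fun h => hbb'.1 h.1).blocked
      (hne 1 1).symm (hne 2 2).symm
    refine ⟨false, fun t s h => ?_⟩
    fin_cases t <;> fin_cases s <;> simp [isOuter] at h ⊢ <;> assumption

section DoubleCycle

variable {k : ℕ} {a b c : ZMod k → V}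

def pathVertex (a b c : ZMod k → V) (i : ZMod k) : Fin 3 → V := ![a i, b i, c i]

theorem pathVertex_mem (i : ZMod k) (t : Fin 3) :
    pathVertex a b c i t ∈ ({a i, b i, c i} : Set V) := by
  fin_cases t <;> simp [pathVertex]

theorem mem_Kset_iff {u : V} : u ∈ Kset a b c ↔ ∃ i t, pathVertex a b c i t = u := by
  simp [Kset, pathVertex, Fin.exists_fin_succ, eq_comm]

theorem pathVertex_ne (hD : ∀ i j, i ≠ j → Disjoint ({a i, b i, c i} : Set V) {a j, b j, c j})
    {i j : ZMod k} (hij : i ≠ j) (t s : Fin 3) : pathVertex a b c i t ≠ pathVertex a b c j s :=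
  fun h => Set.disjoint_left.mp (hD i j hij) (pathVertex_mem i t) (h ▸ pathVertex_mem j s)

theorem fullyJoined_of_isDoubleCycle (hP : MissingPaths2 A) (hC : IsDoubleCycle A k a b c)
    {i j : ZMod k} (hij : i ≠ j) : FullyJoined A (pathVertex a b c) i j := by
  obtain ⟨-, hM, hD, -⟩ := hC
  intro t s
  by_contra! h
  have hw := mem_of_isMissing_of_missingPaths2 hP (hM i).1 (hM i).2.1 (hM i).2.2
    (pathVertex_mem i t) ⟨pathVertex_ne hD hij t s, h.1, h.2⟩
  exact Set.disjoint_left.mp (hD i j hij) hw (pathVertex_mem j s)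

theorem exists_blockedTo_of_isDoubleCycle (hC : IsDoubleCycle A k a b c) (n : ZMod k) :
    ∃ e, BlockedTo A isOuter (pathVertex a b c) e n (n + 1) := by
  obtain ⟨hk, -, hD, hL⟩ := hC
  have : Fact (1 < k) := ⟨hk⟩
  obtain ⟨L1, L2, L3, L4⟩ := hL n
  exact exists_blocked_of_loses (pathVertex_ne hD (by simp)) L1 L2 L3 L4

end DoubleCycle

theorem outIn_diff_eq_of_forall_iff {K : Set V} {x y : V} (hx : ¬ A x x) (hy : ¬ A y y)
    (h : ∀ u ∈ K, u ≠ x → u ≠ y → (A x u ↔ A y u)) :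
    outIn A K x \ {y} = outIn A K y \ {x} := by
  ext u
  simp only [outIn, Set.mem_sdiff, Set.mem_ofPred_eq, Set.mem_singleton_iff]
  grind

theorem inIn_diff_eq_of_forall_iff {K : Set V} {x y : V} (hx : ¬ A x x) (hy : ¬ A y y)
    (h : ∀ u ∈ K, u ≠ x → u ≠ y → (A u x ↔ A u y)) :
    inIn A K x \ {y} = inIn A K y \ {x} := by
  ext u
  simp only [inIn, Set.mem_sdiff, Set.mem_ofPred_eq, Set.mem_singleton_iff]
  grind

theorem stmt7_general {V : Type*} (A : V → V → Prop) (hA : Oriented A)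
    (hP : MissingPaths2 A) (k : ℕ) (a b c : ZMod k → V)
    (hC : IsDoubleCycle A k a b c) (K : Set V) (hK : K = Kset a b c) :
    ∀ i, outIn A K (a i) \ {c i} = outIn A K (c i) \ {a i} ∧
         inIn A K (a i) \ {c i} = inIn A K (c i) \ {a i} := by
  subst hK
  intro i
  have hirr : ∀ v, ¬ A v v := fun v h => hA v v h h
  have htwin : ∀ u ∈ Kset a b c, u ≠ a i → u ≠ c i →
      (A (a i) u ↔ A (c i) u) ∧ (A u (a i) ↔ A u (c i)) := by
    rintro u hu hua huc
    obtain ⟨j, s, rfl⟩ := mem_Kset_iff.mp hu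
    by_cases hji : j = i
    · subst hji
      obtain ⟨hab, hbc, -⟩ := hC.2.1 j
      fin_cases s <;> simp_all [pathVertex, IsMissing]
    · exact arc_iff_of_kind_eq hC.1 hA isOuter_surjective
        (fun _ _ => fullyJoined_of_isDoubleCycle hP hC) (exists_blockedTo_of_isDoubleCycle hC)
        (Ne.symm hji) (t := 0) (t' := 2) rfl s
  exact ⟨outIn_diff_eq_of_forall_iff (hirr _) (hirr _) fun u hu hua huc => (htwin u hu hua huc).1,
    inIn_diff_eq_of_forall_iff (hirr _) (hirr _) fun u hu hua huc => (htwin u hu hua huc).2⟩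

/-- Lemma 4.8: `aᵢ` and `cᵢ` have the same first neighborhoods in `D[K(C)]`,
apart from one another. -/
theorem stmt7 {V : Type*} [Fintype V] (A : V → V → Prop) (hA : Oriented A)
    (hP : MissingPaths2 A) (k : ℕ) (a b c : ZMod k → V)
    (hC : IsDoubleCycle A k a b c) (K : Set V) (hK : K = Kset a b c) :
    ∀ i, outIn A K (a i) \ {c i} = outIn A K (c i) \ {a i} ∧
         inIn A K (a i) \ {c i} = inIn A K (c i) \ {a i} :=
  stmt7_general A hA hP k a b c hC K hK

end SSNC
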